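/- Let p be a prime and let A be a commutative ring with an element ϖ ∈ A such that ϖ divides p and A is ϖ-adically complete. Then the componentwise reduction map from the set of p-power-compatible sequences in A to the set of p-power-compatible sequences in A/pA, sending (f_n)_{n∈ℕ} with f_{n+1}^p = f_n for all n to (f_n mod p)_{n∈ℕ}, is a bijection; moreover this bijection is multiplicative (it sends the termwise product of two sequences to the termwise product of their images) and sends the constant sequence 1 to the constant sequence 1. -/

import Mathlib

/-!
Let `I` be an ideal containing `p` for which `A` is `I`-adically complete. If two compatible
sequences agree modulo `p`, then `f n = f (n + m) ^ p ^ m ≡ g (n + m) ^ p ^ m = g n` modulo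
`I ^ (m + 1)`, so they are equal. Conversely, if `a n` lifts the `n`-th term of a compatible
sequence modulo `p`, then `m ↦ a (n + m) ^ p ^ m` has consecutive differences in `p I ^ m`; its
limit is a lift of the `n`-th term, and the limits form a compatible sequence.
-/

/-- The set of `p`-power-compatible sequences in a commutative ring `R`. -/
def PPowCompatible (p : ℕ) (R : Type) [CommRing R] : Type :=
  { f : ℕ → R // ∀ n : ℕ, f (n + 1) ^ p = f n }

/-- Componentwise reduction of `p`-power-compatible sequences modulo `p`. -/
def reduceModP (p : ℕ) (A : Type) [CommRing A] :
    PPowCompatible p A → PPowCompatible p (A ⧸ Ideal.span {(p : A)}) :=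
  fun f => ⟨fun n => Ideal.Quotient.mk (Ideal.span {(p : A)}) (f.1 n),
    fun n => by rw [← map_pow, f.2]⟩

open Ideal Finset

theorem PPowCompatible.pow_pow_apply {p : ℕ} {R : Type} [CommRing R] (f : PPowCompatible p R)
    (n m : ℕ) : f.1 (n + m) ^ p ^ m = f.1 n := by
  induction m with
  | zero => simp
  | succ m ih => rw [pow_succ', pow_mul, ← add_assoc, f.2, ih]

section

variable {R : Type*} [CommRing R] {I : Ideal R}

theorem IsHausdorff.eq_of_forall_sModEq_pow [IsHausdorff I R] {x y : R}
    (h : ∀ n, x ≡ y [SMOD I ^ n]) : x = y :=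
  (IsHausdorff.eq_iff_smodEq (I := I)).mpr fun n => by simpa only [smul_eq_mul, mul_top] using h n

theorem SModEq.pow_pow_of_span_natCast {p : ℕ} (hpI : (p : R) ∈ I) {x y : R}
    (h : x ≡ y [SMOD span {(p : R)}]) (m : ℕ) :
    x ^ p ^ m ≡ y ^ p ^ m [SMOD span {(p : R)} * I ^ m] := by
  induction m with
  | zero => simpa using h
  | succ m ih =>
    have hle : span {(p : R)} * I ^ m ≤ I :=
      mul_le_left.trans ((span_singleton_le_iff_mem I).mpr hpI)
    rw [pow_succ p m, pow_mul, pow_mul, pow_succ I m, ← mul_assoc]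
    exact ih.pow_mul_of_le hpI hle

/-- The limit is `c 0 + x * ∑ₖ d k`, where `d k ∈ I ^ k` and `x * d k = c (k + 1) - c k`. -/
theorem IsPrecomplete.exists_sModEq_span_singleton_mul_pow [IsPrecomplete I R] (x : R)
    {c : ℕ → R} (hc : ∀ m, c m ≡ c (m + 1) [SMOD span {x} * I ^ m]) :
    ∃ L, ∀ m, c m ≡ L [SMOD span {x} * I ^ m] := by
  choose d hdI hd using fun m => mem_span_singleton_mul.mp (SModEq.sub_mem.mp (hc m).symm)
  have hc_eq : ∀ m, c m = c 0 + x * ∑ k ∈ range m, d k := by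
    intro m
    induction m with
    | zero => simp
    | succ m ih => rw [sum_range_succ, mul_add, hd, ← add_assoc, ← ih, add_sub_cancel]
  obtain ⟨s, hs⟩ := IsPrecomplete.prec (I := I) ‹_› (f := fun m => ∑ k ∈ range m, d k)
    fun {m n} hmn => by
      rw [SModEq.sub_mem, smul_eq_mul, mul_top, ← neg_sub, neg_mem_iff, ← sum_Ico_eq_sub _ hmn]
      exact Submodule.sum_mem _ fun k hk => pow_le_pow_right (mem_Ico.mp hk).1 (hdI k)
  refine ⟨c 0 + x * s, fun m => SModEq.sub_mem.mpr ?_⟩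
  rw [hc_eq m, add_sub_add_left_eq_sub, ← mul_sub]
  exact mul_mem_mul (mem_span_singleton_self x)
    (by simpa only [smul_eq_mul, mul_top] using SModEq.sub_mem.mp (hs m))

end

section

variable {A : Type} [CommRing A] {I : Ideal A} {p : ℕ}

theorem reduceModP_injective [IsHausdorff I A] (hpI : (p : A) ∈ I) :
    Function.Injective (reduceModP p A) := by
  intro f g hfg
  have hmod : ∀ n, f.1 n ≡ g.1 n [SMOD I] := fun n =>
    SModEq.mono ((span_singleton_le_iff_mem I).mpr hpI) (congrFun (congrArg Subtype.val hfg) n)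
  refine Subtype.ext (funext fun n => IsHausdorff.eq_of_forall_sModEq_pow (I := I) fun m => ?_)
  rw [← f.pow_pow_apply n m, ← g.pow_pow_apply n m]
  exact ((hmod (n + m)).pow_pow_add_one hpI m).mono (pow_le_pow_right m.le_succ)

theorem reduceModP_surjective [IsAdicComplete I A] (hpI : (p : A) ∈ I) :
    Function.Surjective (reduceModP p A) := by
  intro G
  choose a ha using fun n => Ideal.Quotient.mk_surjective (G.1 n)
  have hstep : ∀ n, a (n + 1) ^ p ≡ a n [SMOD span {(p : A)}] := fun n => by
    rw [SModEq.idealQuotientMk, map_pow, ha, ha, G.2]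
  have hlim : ∀ n, ∃ L, ∀ m, a (n + m) ^ p ^ m ≡ L [SMOD span {(p : A)} * I ^ m] := fun n =>
    IsPrecomplete.exists_sModEq_span_singleton_mul_pow _ fun m => by
      rw [← add_assoc, pow_succ', pow_mul]
      exact ((hstep (n + m)).pow_pow_of_span_natCast hpI m).symm
  choose L hL using hlim
  refine ⟨⟨L, fun n => IsHausdorff.eq_of_forall_sModEq_pow (I := I) fun m => ?_⟩,
    Subtype.ext (funext fun n => ?_)⟩
  · have h1 := ((hL (n + 1) m).symm.mono mul_le_right).pow p
    have h2 := (hL n (m + 1)).mono (mul_le_right.trans (pow_le_pow_right m.le_succ))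
    rw [← pow_mul, ← pow_succ, add_right_comm, add_assoc] at h1
    exact h1.trans h2
  · have h0 := hL n 0
    simp only [add_zero, pow_zero, pow_one, mul_one] at h0
    rw [← ha n]
    exact h0.symm

end

theorem p_power_compatible_sequences_lift
    (p : ℕ) (A : Type) [CommRing A] (ϖ : A)
    (hdvd : ϖ ∣ (p : A)) (hcomplete : IsAdicComplete (Ideal.span {ϖ}) A) :
    Function.Bijective (reduceModP p A) ∧
    (∀ f g : PPowCompatible p A,
      reduceModP p A ⟨fun n => f.1 n * g.1 n, fun n => by rw [mul_pow, f.2, g.2]⟩ =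
        ⟨fun n => (reduceModP p A f).1 n * (reduceModP p A g).1 n,
          fun n => by rw [mul_pow, (reduceModP p A f).2, (reduceModP p A g).2]⟩) ∧
    reduceModP p A ⟨fun _ => 1, fun _ => one_pow p⟩ =
      ⟨fun _ => 1, fun _ => one_pow p⟩ := by
  have hpI : (p : A) ∈ Ideal.span {ϖ} := mem_span_singleton.mpr hdvd
  exact ⟨⟨reduceModP_injective hpI, reduceModP_surjective hpI⟩, fun _ _ => rfl, rfl⟩
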